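/- arXiv:2401.15395 — 9 statements merged into one kernel-verified Lean document; each statement's English description precedes it below -/
import Mathlib

section
/- For every fuzzy frame F = ⟨W,R⟩, the formula □p ↔ ¬ᵢ◇¬ᵢp is KGinv-valid on F if and only if F is crisp (i.e., R takes values only in {0,1}). -/
/-! If every degree `R w u` is crisp, then `R w u ⇒ x = 1 - min (R w u) (1 - x)`, and the
order-reversing map `x ↦ 1 - x` turns the infimum defining `□p` into `1` minus the supremum
defining `◇¬ᵢp`. If some `c = R w w'` lies strictly between `0` and `1`, make `p` false exactly at
`w'`: then `□p` is `c ⇒ 0 = 0` at `w`, while `◇¬ᵢp` is at most `c`, so `¬ᵢ◇¬ᵢp ≥ 1 - c > 0`. -/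

noncomputable def Gimp (x y : ℝ) : ℝ := if x ≤ y then 1 else y

inductive Fml : Type
  | var : ℕ → Fml
  | inv : Fml → Fml
  | and : Fml → Fml → Fml
  | imp : Fml → Fml → Fml
  | box : Fml → Fml
  | dia : Fml → Fml
  deriving DecidableEq

noncomputable def Fml.eval {W : Type} (R : W → W → ℝ) (v : ℕ → W → ℝ) : Fml → W → ℝ
  | .var p, w => v p w
  | .inv φ, w => 1 - Fml.eval R v φ w
  | .and φ χ, w => min (Fml.eval R v φ w) (Fml.eval R v χ w)
  | .imp φ χ, w => Gimp (Fml.eval R v φ w) (Fml.eval R v χ w)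
  | .box φ, w => sInf (Set.range fun w' => Gimp (R w w') (Fml.eval R v φ w'))
  | .dia φ, w => sSup (Set.range fun w' => min (R w w') (Fml.eval R v φ w'))

def KGinvValid {W : Type} (R : W → W → ℝ) (φ : Fml) : Prop :=
  ∀ v : ℕ → W → ℝ, (∀ p w, v p w ∈ Set.Icc (0:ℝ) 1) → ∀ w : W, Fml.eval R v φ w = 1

def Fml.biiff (φ χ : Fml) : Fml := .and (.imp φ χ) (.imp χ φ)

open Set

lemma Real.iInf_mem_Icc_zero_one {ι : Sort*} {f : ι → ℝ} (hf : ∀ i, f i ∈ Icc 0 1) :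
    ⨅ i, f i ∈ Icc 0 1 := by
  refine ⟨Real.iInf_nonneg fun i => (hf i).1, ?_⟩
  rcases isEmpty_or_nonempty ι with hι | ⟨⟨i⟩⟩
  · simp
  · exact ciInf_le_of_le ⟨0, forall_mem_range.2 fun i => (hf i).1⟩ i (hf i).2

lemma Real.iSup_mem_Icc_zero_one {ι : Sort*} {f : ι → ℝ} (hf : ∀ i, f i ∈ Icc 0 1) :
    ⨆ i, f i ∈ Icc 0 1 :=
  ⟨Real.iSup_nonneg fun i => (hf i).1, Real.iSup_le (fun i => (hf i).2) zero_le_one⟩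

lemma Real.one_sub_ciSup {ι : Sort*} [Nonempty ι] {f : ι → ℝ} (hf : BddAbove (range f)) :
    1 - ⨆ i, f i = ⨅ i, 1 - f i :=
  (OrderIso.subLeft (1 : ℝ)).map_ciSup hf

section Gimp

variable {x y : ℝ}

lemma Gimp_of_le (h : x ≤ y) : Gimp x y = 1 := if_pos h

lemma Gimp_of_lt (h : y < x) : Gimp x y = y := if_neg h.not_ge

lemma Gimp_mem_Icc (hy : y ∈ Icc 0 1) : Gimp x y ∈ Icc 0 1 := by
  unfold Gimp
  split_ifs
  exacts [⟨zero_le_one, le_rfl⟩, hy]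

lemma Gimp_eq_one_iff (hx : x ≤ 1) : Gimp x y = 1 ↔ x ≤ y := by
  refine ⟨fun h => ?_, Gimp_of_le⟩
  by_contra! hlt
  rw [Gimp_of_lt hlt] at h
  linarith

lemma min_Gimp_eq_one_iff (hx : x ∈ Icc 0 1) (hy : y ∈ Icc 0 1) :
    min (Gimp x y) (Gimp y x) = 1 ↔ x = y := by
  have hxy := (Gimp_mem_Icc (x := x) hy).2
  have hyx := (Gimp_mem_Icc (x := y) hx).2
  rw [le_antisymm_iff (a := x), ← Gimp_eq_one_iff hx.2, ← Gimp_eq_one_iff hy.2]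
  constructor
  · intro h
    exact ⟨le_antisymm hxy (h ▸ min_le_left _ _), le_antisymm hyx (h ▸ min_le_right _ _)⟩
  · rintro ⟨h₁, h₂⟩
    rw [h₁, h₂, min_self]

lemma Gimp_eq_one_sub_min {r : ℝ} (hr : r = 0 ∨ r = 1) (hx : x ∈ Icc 0 1) :
    Gimp r x = 1 - min r (1 - x) := by
  rcases hr with rfl | rfl
  · rw [Gimp_of_le hx.1, min_eq_left (by linarith [hx.2])]
    ring
  · rw [min_eq_right (by linarith [hx.1])]
    rcases hx.2.lt_or_eq with hlt | rfl
    · rw [Gimp_of_lt hlt]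
      ring
    · rw [Gimp_of_le le_rfl]
      ring

end Gimp

namespace Fml

variable {W : Type} {R : W → W → ℝ} {v : ℕ → W → ℝ}

lemma eval_mem_Icc (hR : ∀ w w', R w w' ∈ Icc (0:ℝ) 1) (hv : ∀ p w, v p w ∈ Icc (0:ℝ) 1) :
    ∀ (φ : Fml) (w : W), φ.eval R v w ∈ Icc (0:ℝ) 1
  | .var p, w => hv p w
  | .inv φ, w => by
    have := eval_mem_Icc hR hv φ w
    exact ⟨by simp [eval, this.2], by simp [eval, this.1]⟩
  | .and φ χ, w =>
    ⟨le_min (eval_mem_Icc hR hv φ w).1 (eval_mem_Icc hR hv χ w).1,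
      (min_le_left _ _).trans (eval_mem_Icc hR hv φ w).2⟩
  | .imp _ χ, _ => Gimp_mem_Icc (eval_mem_Icc hR hv χ _)
  | .box φ, w => Real.iInf_mem_Icc_zero_one fun u => Gimp_mem_Icc (eval_mem_Icc hR hv φ u)
  | .dia φ, w => Real.iSup_mem_Icc_zero_one fun u =>
    ⟨le_min (hR w u).1 (eval_mem_Icc hR hv φ u).1, (min_le_left _ _).trans (hR w u).2⟩

lemma kGinvValid_biiff_iff (hR : ∀ w w', R w w' ∈ Icc (0:ℝ) 1) {φ χ : Fml} :
    KGinvValid R (biiff φ χ) ↔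
      ∀ v : ℕ → W → ℝ, (∀ p w, v p w ∈ Icc (0:ℝ) 1) → ∀ w, φ.eval R v w = χ.eval R v w :=
  forall₂_congr fun _ hv => forall_congr' fun _ =>
    min_Gimp_eq_one_iff (eval_mem_Icc hR hv _ _) (eval_mem_Icc hR hv _ _)

lemma eval_box_eq_eval_inv_dia_inv {w : W} (hR : ∀ u, R w u = 0 ∨ R w u = 1) {φ : Fml}
    (hφ : ∀ u, φ.eval R v u ∈ Icc (0:ℝ) 1) :
    (box φ).eval R v w = (inv (dia (inv φ))).eval R v w := by
  have : Nonempty W := ⟨w⟩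
  have hbdd : BddAbove (range fun u => min (R w u) (1 - φ.eval R v u)) :=
    ⟨1, forall_mem_range.2 fun u => (min_le_left _ _).trans (by rcases hR u with h | h <;> simp [h])⟩
  change ⨅ u, Gimp (R w u) (φ.eval R v u) = 1 - ⨆ u, min (R w u) (1 - φ.eval R v u)
  rw [Real.one_sub_ciSup hbdd]
  exact iInf_congr fun u => Gimp_eq_one_sub_min (hR u) (hφ u)

lemma exists_eval_box_lt_eval_inv_dia_inv {w w' : W} (hR : ∀ u, R w u ∈ Icc (0:ℝ) 1)
    (h₀ : 0 < R w w') (h₁ : R w w' < 1) :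
    ∃ v : ℕ → W → ℝ, (∀ p u, v p u ∈ Icc (0:ℝ) 1) ∧
      (box (var 0)).eval R v w < (inv (dia (inv (var 0)))).eval R v w := by
  classical
  let v : ℕ → W → ℝ := fun _ u => if u = w' then 0 else 1
  have hv : ∀ p u, v p u ∈ Icc (0:ℝ) 1 := fun p u => by
    by_cases hu : u = w' <;> simp [v, hu]
  have hbox : (box (var 0)).eval R v w ≤ 0 := by
    refine ciInf_le_of_le ⟨0, forall_mem_range.2 fun u => (Gimp_mem_Icc (hv 0 u)).1⟩ w' ?_
    simp [eval, v, Gimp_of_lt h₀]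
  have hdia : (dia (inv (var 0))).eval R v w ≤ R w w' := by
    refine Real.iSup_le (fun u => ?_) h₀.le
    by_cases hu : u = w'
    · simp [eval, v, hu]
    · simp [eval, v, hu, (hR u).1, h₀.le]
  refine ⟨v, hv, ?_⟩
  change _ < 1 - _
  linarith

end Fml

theorem statement0_general {W : Type} (R : W → W → ℝ)
    (hR : ∀ w w', R w w' ∈ Set.Icc (0:ℝ) 1) :
    KGinvValid R (Fml.biiff (.box (.var 0)) (.inv (.dia (.inv (.var 0))))) ↔
      ∀ w w', R w w' = 0 ∨ R w w' = 1 := by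
  rw [Fml.kGinvValid_biiff_iff hR]
  constructor
  · intro hvalid w w'
    by_contra! hfuzzy
    obtain ⟨v, hv, hlt⟩ := Fml.exists_eval_box_lt_eval_inv_dia_inv (hR w ·)
      ((hR w w').1.lt_of_ne' hfuzzy.1) ((hR w w').2.lt_of_ne hfuzzy.2)
    exact hlt.ne (hvalid v hv w)
  · intro hcrisp v hv w
    exact Fml.eval_box_eq_eval_inv_dia_inv (hcrisp w) fun u => Fml.eval_mem_Icc hR hv _ u

/-- □p ↔ ¬ᵢ◇¬ᵢp is KGinv-valid on a fuzzy frame iff the frame is crisp. -/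
theorem statement0 {W : Type} [Nonempty W] (R : W → W → ℝ)
    (hR : ∀ w w', R w w' ∈ Set.Icc (0:ℝ) 1) :
    KGinvValid R (Fml.biiff (.box (.var 0)) (.inv (.dia (.inv (.var 0))))) ↔
      ∀ w w', R w w' = 0 ∨ R w w' = 1 :=
  statement0_general R hR
end

section
/- Consider the fuzzy frame F with W = {w, w', w''}, R(w,w') = R(w,w'') = 2/3 and R = 0 on all other pairs, and the KGinv-model on F in which every propositional variable q satisfies v(q,w) = 1, v(q,w') = 1/5 and v(q,w'') = 1/4. Then v(□p,w) = 1/5, but there is no □-free formula χ of L_inv (i.e., built only from variables, ¬ᵢ, ∧, →, ◇) with v(χ,w) ∈ {1/5, 4/5}. -/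
noncomputable def R3 : Fin 3 → Fin 3 → ℝ :=
  fun i j => if i = 0 ∧ (j = 1 ∨ j = 2) then 2/3 else 0

noncomputable def v3 : ℕ → Fin 3 → ℝ :=
  fun _ w => if w = 0 then 1 else if w = 1 then 1/5 else 1/4

def BoxFree : Fml → Prop
  | .var _ => True
  | .inv φ => BoxFree φ
  | .and φ χ => BoxFree φ ∧ BoxFree χ
  | .imp φ χ => BoxFree φ ∧ BoxFree χ
  | .box _ => False
  | .dia φ => BoxFree φ

/-!
Every □-free formula χ has only a few possible value profiles on this model (with `w, w', w''`
encoded as `0, 1, 2 : Fin 3`). The values at `w'` and `w''` are linked by the order isomorphism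
`0 ↦ 0, 1/5 ↦ 1/4, 4/5 ↦ 3/4, 1 ↦ 1`, which commutes with `1 - x`, `min` and the Gödel
implication. Since `w` sees both `w'` and `w''` with degree `2/3`,
`v(◇χ, w) = min (2/3) (max b c)`, where `b, c` are the values of `χ` at `w', w''` and
`max b c ∈ {0, 1/4, 4/5, 1}`; so it lies in `{0, 1/4, 2/3}`. Closing `{0, 1/4, 2/3, 1}` under
`1 - x`, `min` and Gödel implication gives `{0, 1/4, 1/3, 2/3, 3/4, 1}`, which avoids `1/5` and
`4/5`. The box `□p` instead takes the infimum `min (2/3 ⇒ 1/5) (2/3 ⇒ 1/4) = 1/5`.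
-/

theorem range_fin_three {α : Type*} (g : Fin 3 → α) : Set.range g = {g 0, g 1, g 2} := by
  ext x
  simp [Fin.exists_fin_succ, eq_comm]

theorem sSup_range_fin_three {α : Type*} [ConditionallyCompleteLinearOrder α] (g : Fin 3 → α) :
    sSup (Set.range g) = max (g 0) (max (g 1) (g 2)) := by
  rw [range_fin_three, csSup_insert (Set.toFinite _).bddAbove (Set.insert_nonempty _ _), csSup_pair]

theorem sInf_range_fin_three {α : Type*} [ConditionallyCompleteLinearOrder α] (g : Fin 3 → α) :
    sInf (Set.range g) = min (g 0) (min (g 1) (g 2)) := by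
  rw [range_fin_three, csInf_insert (Set.toFinite _).bddBelow (Set.insert_nonempty _ _), csInf_pair]

theorem Gimp_eq_one_or_eq (x y : ℝ) : Gimp x y = 1 ∨ Gimp x y = y := by
  unfold Gimp
  split_ifs <;> simp

theorem eval_dia_R3 (v : ℕ → Fin 3 → ℝ) (φ : Fml) (hφ : ∀ w, 0 ≤ φ.eval R3 v w) :
    (Fml.dia φ).eval R3 v =
      ![max (min (2/3) (φ.eval R3 v 1)) (min (2/3) (φ.eval R3 v 2)), 0, 0] := by
  funext i
  rw [Fml.eval, sSup_range_fin_three]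
  fin_cases i <;> norm_num [R3, hφ, Fin.ext_iff]

theorem eval_box_var_R3_v3 (p : ℕ) : (Fml.box (.var p)).eval R3 v3 0 = 1/5 := by
  rw [Fml.eval, sInf_range_fin_three]
  norm_num [R3, v3, Fml.eval, Gimp, Fin.ext_iff]

def rootValues : Set ℝ := {0, 1/4, 1/3, 2/3, 3/4, 1}

def leafValues : Set (ℝ × ℝ) := {(0, 0), (1/5, 1/4), (4/5, 3/4), (1, 1)}

theorem one_sub_mem_rootValues {a : ℝ} (ha : a ∈ rootValues) : 1 - a ∈ rootValues := by
  simp only [rootValues, Set.mem_insert_iff, Set.mem_singleton_iff] at ha ⊢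
  rcases ha with rfl | rfl | rfl | rfl | rfl | rfl <;> norm_num

theorem Gimp_mem_rootValues (x : ℝ) {a : ℝ} (ha : a ∈ rootValues) : Gimp x a ∈ rootValues := by
  rcases Gimp_eq_one_or_eq x a with h | h <;> rw [h]
  exacts [by simp [rootValues], ha]

theorem min_max_mem_rootValues {p : ℝ × ℝ} (hp : p ∈ leafValues) :
    max (min (2/3) p.1) (min (2/3) p.2) ∈ rootValues := by
  simp only [leafValues, Set.mem_insert_iff, Set.mem_singleton_iff] at hp
  rcases hp with rfl | rfl | rfl | rfl <;> norm_num [rootValues]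

theorem one_sub_mem_leafValues {p : ℝ × ℝ} (hp : p ∈ leafValues) :
    (1 - p.1, 1 - p.2) ∈ leafValues := by
  simp only [leafValues, Set.mem_insert_iff, Set.mem_singleton_iff] at hp
  rcases hp with rfl | rfl | rfl | rfl <;> norm_num [leafValues]

theorem min_mem_leafValues {p q : ℝ × ℝ} (hp : p ∈ leafValues) (hq : q ∈ leafValues) :
    (min p.1 q.1, min p.2 q.2) ∈ leafValues := by
  simp only [leafValues, Set.mem_insert_iff, Set.mem_singleton_iff] at hp hq
  rcases hp with rfl | rfl | rfl | rfl <;> rcases hq with rfl | rfl | rfl | rfl <;>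
    norm_num [leafValues]

theorem Gimp_mem_leafValues {p q : ℝ × ℝ} (hp : p ∈ leafValues) (hq : q ∈ leafValues) :
    (Gimp p.1 q.1, Gimp p.2 q.2) ∈ leafValues := by
  simp only [leafValues, Set.mem_insert_iff, Set.mem_singleton_iff] at hp hq
  rcases hp with rfl | rfl | rfl | rfl <;> rcases hq with rfl | rfl | rfl | rfl <;>
    norm_num [leafValues, Gimp]

def IsBoxFreeProfile (f : Fin 3 → ℝ) : Prop :=
  f 0 ∈ rootValues ∧ (f 1, f 2) ∈ leafValues

namespace IsBoxFreeProfile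

variable {f g : Fin 3 → ℝ}

theorem nonneg (hf : IsBoxFreeProfile f) (w : Fin 3) : 0 ≤ f w := by
  obtain ⟨h0, h12⟩ := hf
  simp only [rootValues, leafValues, Set.mem_insert_iff, Set.mem_singleton_iff,
    Prod.mk.injEq] at h0 h12
  have hroot : 0 ≤ f 0 := by rcases h0 with h | h | h | h | h | h <;> norm_num [h]
  have hleaves : 0 ≤ f 1 ∧ 0 ≤ f 2 := by
    rcases h12 with ⟨h1, h2⟩ | ⟨h1, h2⟩ | ⟨h1, h2⟩ | ⟨h1, h2⟩ <;> norm_num [h1, h2]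
  fin_cases w
  exacts [hroot, hleaves.1, hleaves.2]

theorem one_sub (hf : IsBoxFreeProfile f) : IsBoxFreeProfile (fun w => 1 - f w) :=
  ⟨one_sub_mem_rootValues hf.1, one_sub_mem_leafValues hf.2⟩

theorem min (hf : IsBoxFreeProfile f) (hg : IsBoxFreeProfile g) :
    IsBoxFreeProfile (fun w => Min.min (f w) (g w)) := by
  refine ⟨?_, min_mem_leafValues hf.2 hg.2⟩
  rcases min_choice (f 0) (g 0) with h | h <;> simp only [h]
  exacts [hf.1, hg.1]

theorem gimp (hf : IsBoxFreeProfile f) (hg : IsBoxFreeProfile g) :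
    IsBoxFreeProfile (fun w => Gimp (f w) (g w)) :=
  ⟨Gimp_mem_rootValues _ hg.1, Gimp_mem_leafValues hf.2 hg.2⟩

theorem dia (hf : IsBoxFreeProfile f) :
    IsBoxFreeProfile ![max (Min.min (2/3) (f 1)) (Min.min (2/3) (f 2)), 0, 0] :=
  ⟨min_max_mem_rootValues hf.2, by simp [leafValues]⟩

end IsBoxFreeProfile

theorem BoxFree.isBoxFreeProfile {χ : Fml} (hχ : BoxFree χ) :
    IsBoxFreeProfile (χ.eval R3 v3) := by
  induction χ with
  | var p => exact ⟨by simp [Fml.eval, v3, rootValues], by simp [Fml.eval, v3, leafValues]⟩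
  | inv φ ih => exact (ih hχ).one_sub
  | and φ ψ ihφ ihψ => exact (ihφ hχ.1).min (ihψ hχ.2)
  | imp φ ψ ihφ ihψ => exact (ihφ hχ.1).gimp (ihψ hχ.2)
  | box φ => exact hχ.elim
  | dia φ ih =>
    rw [eval_dia_R3 v3 φ (ih hχ).nonneg]
    exact (ih hχ).dia

theorem statement1 :
    Fml.eval R3 v3 (.box (.var 0)) 0 = 1/5 ∧
    ¬ ∃ χ : Fml, BoxFree χ ∧
      (Fml.eval R3 v3 χ 0 = 1/5 ∨ Fml.eval R3 v3 χ 0 = 4/5) := by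
  refine ⟨eval_box_var_R3_v3 0, ?_⟩
  rintro ⟨χ, hχ, hval⟩
  have hroot : χ.eval R3 v3 0 ∈ rootValues := hχ.isBoxFreeProfile.1
  simp only [rootValues, Set.mem_insert_iff, Set.mem_singleton_iff] at hroot
  rcases hval with h | h <;> rw [h] at hroot <;> norm_num at hroot
end

section
/- For every fuzzy frame F = ⟨W,R⟩, the formula ¬ᵢΔ(◇𝟏 → ¬ᵢ◇𝟏) is KGinv-valid on F if and only if for every w ∈ W there exists w' ∈ W with R(w,w') > 1/2. -/
def Fml.One : Fml := .imp (.var 0) (.var 0)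
def Fml.Zero : Fml := .inv Fml.One
def Fml.coimp (φ χ : Fml) : Fml := .inv (.imp (.inv χ) (.inv φ))
def Fml.delta (φ : Fml) : Fml := Fml.coimp Fml.One (Fml.coimp Fml.One φ)

lemma eval_one {W : Type} (R : W → W → ℝ) (v : ℕ → W → ℝ) (w : W) :
    Fml.eval R v Fml.One w = 1 := by
  simp [Fml.One, Fml.eval, Gimp]

lemma eval_dia_one {W : Type} (R : W → W → ℝ)
    (hR : ∀ w w', R w w' ∈ Set.Icc (0:ℝ) 1) (v : ℕ → W → ℝ) (w : W) :
    Fml.eval R v (.dia Fml.One) w = sSup (Set.range (R w)) := by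
  have hf : (fun w' => min (R w w') (Fml.eval R v Fml.One w')) = R w := by
    funext w'; rw [eval_one]; exact min_eq_left (hR w w').2
  show sSup (Set.range fun w' => min (R w w') (Fml.eval R v Fml.One w')) = _
  rw [hf]

/-- ¬ᵢΔ(◇𝟏 → ¬ᵢ◇𝟏) is KGinv-valid on F iff every state has a reliable successor. -/
theorem statement6 {W : Type} [Nonempty W] (R : W → W → ℝ)
    (hR : ∀ w w', R w w' ∈ Set.Icc (0:ℝ) 1) :
    KGinvValid R (.inv (Fml.delta (.imp (.dia Fml.One) (.inv (.dia Fml.One))))) ↔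
      ∀ w : W, ∃ w' : W, R w w' > 1/2 := by
  have hbdd : ∀ w : W, BddAbove (Set.range (R w)) := fun w =>
    ⟨1, by rintro x ⟨w', rfl⟩; exact (hR w w').2⟩
  have hne : ∀ w : W, (Set.range (R w)).Nonempty := fun w => Set.range_nonempty _
  have hdpos : ∀ w : W, (0:ℝ) ≤ sSup (Set.range (R w)) := fun w =>
    le_trans (hR w (Classical.arbitrary W)).1 (le_csSup (hbdd w) ⟨_, rfl⟩)
  have hmain : ∀ (v : ℕ → W → ℝ) (w : W),
      Fml.eval R v (.inv (Fml.delta (.imp (.dia Fml.One) (.inv (.dia Fml.One))))) w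
        = if sSup (Set.range (R w)) > 1/2 then 1 else 0 := by
    intro v w
    set d := sSup (Set.range (R w)) with hd
    have h1 : Fml.eval R v (.imp (.dia Fml.One) (.inv (.dia Fml.One))) w
        = Gimp d (1 - d) := by
      show Gimp _ (1 - _) = _
      rw [eval_dia_one R hR]
    have hbig : Fml.eval R v
        (.inv (Fml.delta (.imp (.dia Fml.One) (.inv (.dia Fml.One))))) w
        = Gimp (Gimp (1 - Gimp d (1 - d)) 0) 0 := by
      show (1:ℝ) - (1 - Gimp (1 - (1 - Gimp (1 - _) (1 - _))) (1 - _)) = _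
      rw [h1, eval_one]
      ring_nf
    rw [hbig]
    by_cases hc : d ≤ 1/2
    · have hs : Gimp d (1 - d) = 1 := if_pos (by linarith)
      rw [hs]
      have : Gimp (1 - (1:ℝ)) 0 = 1 := by norm_num [Gimp]
      rw [this]
      rw [if_neg (not_lt.2 hc)]
      simp [Gimp]
    · push_neg at hc
      have hs : Gimp d (1 - d) = 1 - d := if_neg (by intro h; linarith)
      rw [hs]
      have h2 : Gimp (1 - (1 - d)) 0 = 0 := by
        rw [show (1:ℝ) - (1 - d) = d by ring]
        exact if_neg (by intro h; linarith)
      rw [h2, if_pos hc]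
      simp [Gimp]
  constructor
  · intro h w
    have hv : (∀ p w, (fun (_:ℕ) (_:W) => (0:ℝ)) p w ∈ Set.Icc (0:ℝ) 1) := by
      intro p w; constructor <;> norm_num
    have := h (fun _ _ => 0) hv w
    rw [hmain] at this
    by_contra hcon
    push_neg at hcon
    have hle : sSup (Set.range (R w)) ≤ 1/2 :=
      csSup_le (hne w) (by rintro x ⟨w', rfl⟩; exact hcon w')
    rw [if_neg (not_lt.2 hle)] at this
    norm_num at this
  · intro h v hv w
    rw [hmain]
    obtain ⟨w', hw'⟩ := h w
    exact if_pos (lt_of_lt_of_le hw' (le_csSup (hbdd w) ⟨_, rfl⟩))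
end

section
/- Let 0 < x, x' < 1 and let F = ⟨{w},R⟩ and F' = ⟨{w'},R'⟩ be the one-point fuzzy frames with R(w,w) = x and R'(w',w') = x'. Then for every formula φ of L_{Δ,□,◇}: φ is KbiG-valid on F if and only if φ is KbiG-valid on F'. -/
inductive BFml : Type
  | var : ℕ → BFml
  | and : BFml → BFml → BFml
  | or : BFml → BFml → BFml
  | imp : BFml → BFml → BFml
  | snot : BFml → BFml
  | delta : BFml → BFml
  | box : BFml → BFml
  | dia : BFml → BFml

noncomputable def BFml.eval {W : Type} (R : W → W → ℝ) (v : ℕ → W → ℝ) : BFml → W → ℝ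
  | .var p, w => v p w
  | .and φ χ, w => min (BFml.eval R v φ w) (BFml.eval R v χ w)
  | .or φ χ, w => max (BFml.eval R v φ w) (BFml.eval R v χ w)
  | .imp φ χ, w => Gimp (BFml.eval R v φ w) (BFml.eval R v χ w)
  | .snot φ, w => if BFml.eval R v φ w = 0 then 1 else 0
  | .delta φ, w => if BFml.eval R v φ w = 1 then 1 else 0
  | .box φ, w => sInf (Set.range fun w' => Gimp (R w w') (BFml.eval R v φ w'))
  | .dia φ, w => sSup (Set.range fun w' => min (R w w') (BFml.eval R v φ w'))

def KbiGValid {W : Type} (R : W → W → ℝ) (φ : BFml) : Prop :=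
  ∀ v : ℕ → W → ℝ, (∀ p w, v p w ∈ Set.Icc (0:ℝ) 1) → ∀ w : W, BFml.eval R v φ w = 1

/-!
Any order automorphism `h` of `ℝ` fixing `0` and `1` commutes with every connective and
modality of the semantics once it is also applied to the accessibility values, so it preserves
validity. The piecewise linear map through `(0,0)`, `(x,x')`, `(1,1)` is such an automorphism
and turns the one-point frame with value `x` into the one with value `x'`.
-/

namespace OrderIso

variable (h : ℝ ≃o ℝ)

theorem map_gimp (h1 : h 1 = 1) (a b : ℝ) : Gimp (h a) (h b) = h (Gimp a b) := by
  unfold Gimp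
  by_cases hab : a ≤ b
  · rw [if_pos (h.le_iff_le.mpr hab), if_pos hab, h1]
  · rw [if_neg (mt h.le_iff_le.mp hab), if_neg hab]

-- `h 0 = 0` covers the junk value `0` of `sInf` on empty or unbounded sets.
theorem map_real_sInf (h0 : h 0 = 0) (S : Set ℝ) : h (sInf S) = sInf (h '' S) := by
  by_cases hS : S.Nonempty ∧ BddBelow S
  · exact h.map_csInf' hS.1 hS.2
  rcases not_and_or.mp hS with hne | hbdd
  · rw [Set.not_nonempty_iff_eq_empty.mp hne, Set.image_empty, Real.sInf_empty, h0]
  · rw [Real.sInf_of_not_bddBelow hbdd,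
      Real.sInf_of_not_bddBelow (mt h.bddBelow_image.mp hbdd), h0]

theorem map_real_sSup (h0 : h 0 = 0) (S : Set ℝ) : h (sSup S) = sSup (h '' S) := by
  by_cases hS : S.Nonempty ∧ BddAbove S
  · exact h.map_csSup' hS.1 hS.2
  rcases not_and_or.mp hS with hne | hbdd
  · rw [Set.not_nonempty_iff_eq_empty.mp hne, Set.image_empty, Real.sSup_empty, h0]
  · rw [Real.sSup_of_not_bddAbove hbdd,
      Real.sSup_of_not_bddAbove (mt h.bddAbove_image.mp hbdd), h0]

theorem apply_mem_Icc_zero_one (h0 : h 0 = 0) (h1 : h 1 = 1) {t : ℝ} (ht : t ∈ Set.Icc 0 1) :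
    h t ∈ Set.Icc 0 1 :=
  ⟨h0 ▸ h.monotone ht.1, h1 ▸ h.monotone ht.2⟩

end OrderIso

section Automorphism

variable (h : ℝ ≃o ℝ)

theorem BFml.eval_orderIso (h0 : h 0 = 0) (h1 : h 1 = 1) {W : Type} (R : W → W → ℝ)
    (v : ℕ → W → ℝ) (φ : BFml) (w : W) :
    BFml.eval (fun w w' => h (R w w')) (fun p w => h (v p w)) φ w = h (BFml.eval R v φ w) := by
  induction φ generalizing w with
  | var p => rfl
  | and φ χ ihφ ihχ =>
    simp only [BFml.eval, ihφ, ihχ, h.monotone.map_min]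
  | or φ χ ihφ ihχ =>
    simp only [BFml.eval, ihφ, ihχ, h.monotone.map_max]
  | imp φ χ ihφ ihχ =>
    simp only [BFml.eval, ihφ, ihχ, h.map_gimp h1]
  | snot φ ihφ =>
    simp only [BFml.eval, ihφ]
    by_cases hz : BFml.eval R v φ w = 0
    · simp [hz, h0, h1]
    · simp [hz, h0, h0 ▸ h.injective.ne hz]
  | delta φ ihφ =>
    simp only [BFml.eval, ihφ]
    by_cases hz : BFml.eval R v φ w = 1
    · simp [hz, h1]
    · simp [hz, h0, h1 ▸ h.injective.ne hz]
  | box φ ihφ =>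
    simp only [BFml.eval, ihφ, h.map_gimp h1, h.map_real_sInf h0, ← Set.range_comp]
    rfl
  | dia φ ihφ =>
    simp only [BFml.eval, ihφ, ← h.monotone.map_min, h.map_real_sSup h0, ← Set.range_comp]
    rfl

theorem kbiGValid_orderIso_iff (h0 : h 0 = 0) (h1 : h 1 = 1) {W : Type} (R : W → W → ℝ)
    (φ : BFml) :
    KbiGValid (fun w w' => h (R w w')) φ ↔ KbiGValid R φ := by
  constructor
  · intro hvalid v hv w
    apply h.injective
    rw [← BFml.eval_orderIso h h0 h1, h1]
    exact hvalid _ (fun p w => h.apply_mem_Icc_zero_one h0 h1 (hv p w)) w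
  · intro hvalid v hv w
    have hs0 : h.symm 0 = 0 := h.symm_apply_eq.mpr h0.symm
    have hs1 : h.symm 1 = 1 := h.symm_apply_eq.mpr h1.symm
    have hv' : v = fun p w => h (h.symm (v p w)) := by simp
    rw [hv', BFml.eval_orderIso h h0 h1,
      hvalid _ (fun p w => h.symm.apply_mem_Icc_zero_one hs0 hs1 (hv p w)), h1]

end Automorphism

section PiecewiseLinear

variable {x x' : ℝ}

noncomputable def piecewiseLinear (x x' t : ℝ) : ℝ :=
  if t ≤ x then t * (x' / x) else x' + (t - x) * ((1 - x') / (1 - x))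

theorem piecewiseLinear_zero (hx0 : 0 < x) : piecewiseLinear x x' 0 = 0 := by
  simp [piecewiseLinear, hx0.le]

theorem piecewiseLinear_one (hx1 : x < 1) : piecewiseLinear x x' 1 = 1 := by
  have : (1 : ℝ) - x ≠ 0 := by linarith
  rw [piecewiseLinear, if_neg (by linarith)]
  field_simp
  ring

theorem piecewiseLinear_self (hx0 : 0 < x) : piecewiseLinear x x' x = x' := by
  rw [piecewiseLinear, if_pos le_rfl]
  field_simp

theorem piecewiseLinear_strictMono (hx0 : 0 < x) (hx1 : x < 1) (hx'0 : 0 < x')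
    (hx'1 : x' < 1) : StrictMono (piecewiseLinear x x') := by
  intro s t hst
  have hc1 : 0 < x' / x := div_pos hx'0 hx0
  have hc2 : 0 < (1 - x') / (1 - x) := div_pos (by linarith) (by linarith)
  have hxx : x * (x' / x) = x' := by field_simp
  unfold piecewiseLinear
  split_ifs with hs ht ht
  · exact mul_lt_mul_of_pos_right hst hc1
  · nlinarith
  · linarith
  · nlinarith

theorem piecewiseLinear_rightInverse (hx0 : 0 < x) (hx1 : x < 1) (hx'0 : 0 < x')
    (hx'1 : x' < 1) : Function.RightInverse (piecewiseLinear x' x) (piecewiseLinear x x') := by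
  have hx : x ≠ 0 := hx0.ne'
  have hx' : x' ≠ 0 := hx'0.ne'
  have hx1' : 1 - x ≠ 0 := by linarith
  have hx'1' : 1 - x' ≠ 0 := by linarith
  intro y
  by_cases hy : y ≤ x'
  · have hle : y * (x / x') ≤ x := by
      rw [mul_div_assoc', div_le_iff₀ hx'0]; nlinarith
    simp only [piecewiseLinear, if_pos hy, if_pos hle]
    field_simp
  · have hlt : ¬ x + (y - x') * ((1 - x) / (1 - x')) ≤ x := by
      have : 0 < (y - x') * ((1 - x) / (1 - x')) :=
        mul_pos (by linarith) (div_pos (by linarith) (by linarith))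
      linarith
    simp only [piecewiseLinear, if_neg hy, if_neg hlt]
    field_simp
    ring

noncomputable def piecewiseLinearIso (hx0 : 0 < x) (hx1 : x < 1) (hx'0 : 0 < x')
    (hx'1 : x' < 1) : ℝ ≃o ℝ :=
  (piecewiseLinear_strictMono hx0 hx1 hx'0 hx'1).orderIsoOfRightInverse _ _
    (piecewiseLinear_rightInverse hx0 hx1 hx'0 hx'1)

end PiecewiseLinear

/-- A formula of L_{Δ,□,◇} is valid on a one-point frame with reflexive value x ∈ (0,1)
iff it is valid on the one-point frame with reflexive value x' ∈ (0,1). -/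
theorem statement7 (x x' : ℝ) (hx0 : 0 < x) (hx1 : x < 1) (hx'0 : 0 < x') (hx'1 : x' < 1)
    (φ : BFml) :
    KbiGValid (fun _ _ : PUnit => x) φ ↔ KbiGValid (fun _ _ : PUnit => x') φ := by
  let h := piecewiseLinearIso hx0 hx1 hx'0 hx'1
  have hR : (fun _ _ : PUnit => x') = fun w w' => h ((fun _ _ : PUnit => x) w w') :=
    funext₂ fun _ _ => (piecewiseLinear_self hx0).symm
  rw [hR, kbiGValid_orderIso_iff h (piecewiseLinear_zero hx0) (piecewiseLinear_one hx1)]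
end

section
/- There is no formula φ of L_{Δ,□,◇} such that for every fuzzy frame F = ⟨W,R⟩: φ is KbiG-valid on F if and only if sup{R(w,w') : w,w' ∈ W} < 1/2. Likewise, there is no formula ψ of L_{Δ,□,◇} such that for every fuzzy frame F: ψ is KbiG-valid on F if and only if for every w ∈ W there exists w' with R(w,w') > 1/2. -/
/-! Every connective and modality of KbiG commutes with a strictly increasing map `h` fixing `0`
and `1`; on a one-point frame with constant accessibility `c` there is no infimum or supremum left,
so `h` carries a model with accessibility `c` to one with accessibility `h c` and preserves the
value of every formula. Since any `c, c' ∈ (0, 1)` are related by such a piecewise-linear `h`, the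
one-point frames with constant accessibility `1/4` and `3/4` validate the same formulas, while
both defining conditions hold on the first and fail on the second, or vice versa. -/

section StrictMonoTransfer

variable {h : ℝ → ℝ}

lemma StrictMono.map_gimp (hh : StrictMono h) (h1 : h 1 = 1) (a b : ℝ) :
    h (Gimp a b) = Gimp (h a) (h b) := by
  by_cases hab : a ≤ b
  · simp [Gimp, hab, hh.le_iff_le, h1]
  · simp [Gimp, hab, hh.le_iff_le]

lemma BFml.eval_unit_comp (hh : StrictMono h) (h0 : h 0 = 0) (h1 : h 1 = 1) (c : ℝ)
    (v : ℕ → Unit → ℝ) (φ : BFml) :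
    BFml.eval (fun _ _ => h c) (fun p w => h (v p w)) φ () =
      h (BFml.eval (fun _ _ => c) v φ ()) := by
  induction φ with
  | var p => rfl
  | and φ χ ihφ ihχ => simp only [BFml.eval, ihφ, ihχ, hh.monotone.map_min]
  | or φ χ ihφ ihχ => simp only [BFml.eval, ihφ, ihχ, hh.monotone.map_max]
  | imp φ χ ihφ ihχ => simp only [BFml.eval, ihφ, ihχ, hh.map_gimp h1]
  | snot φ ihφ =>
      simp only [BFml.eval, ihφ, hh.injective.eq_iff' h0]
      split_ifs <;> simp [h0, h1]
  | delta φ ihφ =>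
      simp only [BFml.eval, ihφ, hh.injective.eq_iff' h1]
      split_ifs <;> simp [h0, h1]
  | box φ ihφ =>
      simp only [BFml.eval, Set.range_unique, csInf_singleton, ihφ, hh.map_gimp h1]
  | dia φ ihφ =>
      simp only [BFml.eval, Set.range_unique, csSup_singleton, ihφ, hh.monotone.map_min]

lemma kbiGValid_unit_of_comp (hh : StrictMono h) (h0 : h 0 = 0) (h1 : h 1 = 1) (c : ℝ)
    {φ : BFml} (hφ : KbiGValid (fun _ _ : Unit => h c) φ) :
    KbiGValid (fun _ _ : Unit => c) φ := by
  intro v hv w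
  have hv' : ∀ p w, h (v p w) ∈ Set.Icc (0 : ℝ) 1 := fun p w => by
    rw [← h0, ← h1]
    exact ⟨hh.monotone (hv p w).1, hh.monotone (hv p w).2⟩
  have := hφ _ hv' ()
  rw [BFml.eval_unit_comp hh h0 h1, ← h1] at this
  exact hh.injective this

end StrictMonoTransfer

lemma exists_strictMono_map_zero_one {c c' : ℝ} (hc : c ∈ Set.Ioo (0 : ℝ) 1)
    (hc' : c' ∈ Set.Ioo (0 : ℝ) 1) :
    ∃ h : ℝ → ℝ, StrictMono h ∧ h 0 = 0 ∧ h 1 = 1 ∧ h c = c' := by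
  obtain ⟨hc0, hc1⟩ := hc
  obtain ⟨hc'0, hc'1⟩ := hc'
  have hs : 0 < c' / c := div_pos hc'0 hc0
  have ht : 0 < (1 - c') / (1 - c) := div_pos (by linarith) (by linarith)
  refine ⟨fun x => if x ≤ c then x * (c' / c) else c' + (x - c) * ((1 - c') / (1 - c)),
    fun x y hxy => ?_, by simp [hc0.le], ?_, by simp only [le_refl, if_true]; field_simp⟩
  · dsimp only
    split_ifs with hx hy hy
    · exact mul_lt_mul_of_pos_right hxy hs
    · have : x * (c' / c) ≤ c' := by
        calc x * (c' / c) ≤ c * (c' / c) := mul_le_mul_of_nonneg_right hx hs.le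
          _ = c' := by field_simp
      nlinarith
    · linarith
    · nlinarith
  · have : (1 : ℝ) - c ≠ 0 := by linarith
    simp only [show ¬(1 : ℝ) ≤ c by linarith, if_false]
    field_simp
    ring

theorem kbiGValid_unit_const_iff {c c' : ℝ} (hc : c ∈ Set.Ioo (0 : ℝ) 1)
    (hc' : c' ∈ Set.Ioo (0 : ℝ) 1) (φ : BFml) :
    KbiGValid (fun _ _ : Unit => c) φ ↔ KbiGValid (fun _ _ : Unit => c') φ := by
  obtain ⟨h, hh, h0, h1, hhc⟩ := exists_strictMono_map_zero_one hc hc'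
  obtain ⟨g, hg, g0, g1, hgc'⟩ := exists_strictMono_map_zero_one hc' hc
  exact ⟨fun hφ => kbiGValid_unit_of_comp hg g0 g1 c' (hgc' ▸ hφ),
    fun hφ => kbiGValid_unit_of_comp hh h0 h1 c (hhc ▸ hφ)⟩

/-- Neither of the two frame classes of Theorem 2 (items 1 and 2) is definable
in the language L_{Δ,□,◇}. -/
theorem statement8 :
    (¬ ∃ φ : BFml, ∀ (W : Type) (_ : Nonempty W) (R : W → W → ℝ),
      (∀ w w', R w w' ∈ Set.Icc (0:ℝ) 1) →
      (KbiGValid R φ ↔ sSup {x : ℝ | ∃ w w', x = R w w'} < 1/2)) ∧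
    (¬ ∃ ψ : BFml, ∀ (W : Type) (_ : Nonempty W) (R : W → W → ℝ),
      (∀ w w', R w w' ∈ Set.Icc (0:ℝ) 1) →
      (KbiGValid R ψ ↔ ∀ w : W, ∃ w' : W, R w w' > 1/2)) := by
  have hsup (r : ℝ) : sSup {x : ℝ | ∃ _ _ : Unit, x = r} = r := by simp
  have hsame (φ : BFml) :=
    kbiGValid_unit_const_iff (c := 1/4) (c' := 3/4) ⟨by norm_num, by norm_num⟩
      ⟨by norm_num, by norm_num⟩ φ
  constructor
  · rintro ⟨φ, hφ⟩
    have h14 := hφ Unit ⟨()⟩ (fun _ _ => 1/4) (fun _ _ => ⟨by norm_num, by norm_num⟩)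
    have h34 := hφ Unit ⟨()⟩ (fun _ _ => 3/4) (fun _ _ => ⟨by norm_num, by norm_num⟩)
    rw [hsup] at h14 h34
    have := h34.mp ((hsame φ).mp (h14.mpr (by norm_num)))
    norm_num at this
  · rintro ⟨ψ, hψ⟩
    have h14 := hψ Unit ⟨()⟩ (fun _ _ => 1/4) (fun _ _ => ⟨by norm_num, by norm_num⟩)
    have h34 := hψ Unit ⟨()⟩ (fun _ _ => 3/4) (fun _ _ => ⟨by norm_num, by norm_num⟩)
    obtain ⟨_, h⟩ := h14.mp ((hsame ψ).mpr (h34.mpr fun _ => ⟨(), by norm_num⟩)) ()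
    norm_num at h
end

section
/- Let ⟨F,w⟩ = ⟨⟨W,R⁺,R⁻⟩,w⟩ be a bi-relational pointed fuzzy frame and φ ∈ L_inv(2). Then φ is KGinv(2)-valid on ⟨F,w⟩ if and only if φ^⋈ is v₁-valid on ⟨F,w⟩ in KGbl. -/
inductive Fml2 : Type
  | var : ℕ → Fml2
  | inv : Fml2 → Fml2
  | and : Fml2 → Fml2 → Fml2
  | imp : Fml2 → Fml2 → Fml2
  | box1 : Fml2 → Fml2
  | dia1 : Fml2 → Fml2
  | box2 : Fml2 → Fml2
  | dia2 : Fml2 → Fml2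

noncomputable def Fml2.eval {W : Type} (Rp Rm : W → W → ℝ) (v : ℕ → W → ℝ) : Fml2 → W → ℝ
  | .var p, w => v p w
  | .inv φ, w => 1 - Fml2.eval Rp Rm v φ w
  | .and φ χ, w => min (Fml2.eval Rp Rm v φ w) (Fml2.eval Rp Rm v χ w)
  | .imp φ χ, w => Gimp (Fml2.eval Rp Rm v φ w) (Fml2.eval Rp Rm v χ w)
  | .box1 φ, w => sInf (Set.range fun w' => Gimp (Rp w w') (Fml2.eval Rp Rm v φ w'))
  | .dia1 φ, w => sSup (Set.range fun w' => min (Rp w w') (Fml2.eval Rp Rm v φ w'))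
  | .box2 φ, w => sInf (Set.range fun w' => Gimp (Rm w w') (Fml2.eval Rp Rm v φ w'))
  | .dia2 φ, w => sSup (Set.range fun w' => min (Rm w w') (Fml2.eval Rp Rm v φ w'))

inductive Lbl : Type
  | var : ℕ → Lbl
  | neg : Lbl → Lbl
  | and : Lbl → Lbl → Lbl
  | imp : Lbl → Lbl → Lbl
  | box : Lbl → Lbl
  | dia : Lbl → Lbl
  | conf : Lbl → Lbl
  | sAnd : Lbl → Lbl → Lbl
  | sImp : Lbl → Lbl → Lbl
  | bbox : Lbl → Lbl
  | bdia : Lbl → Lbl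

noncomputable def Lbl.eval {W : Type} (Rp Rm : W → W → ℝ) (v1 v2 : ℕ → W → ℝ) :
    Lbl → W → ℝ × ℝ
  | .var p, w => (v1 p w, v2 p w)
  | .neg φ, w => ((Lbl.eval Rp Rm v1 v2 φ w).2, (Lbl.eval Rp Rm v1 v2 φ w).1)
  | .conf φ, w => (1 - (Lbl.eval Rp Rm v1 v2 φ w).2, 1 - (Lbl.eval Rp Rm v1 v2 φ w).1)
  | .and φ χ, w =>
      (min (Lbl.eval Rp Rm v1 v2 φ w).1 (Lbl.eval Rp Rm v1 v2 χ w).1,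
       max (Lbl.eval Rp Rm v1 v2 φ w).2 (Lbl.eval Rp Rm v1 v2 χ w).2)
  | .imp φ χ, w =>
      (Gimp (Lbl.eval Rp Rm v1 v2 φ w).1 (Lbl.eval Rp Rm v1 v2 χ w).1,
       if (Lbl.eval Rp Rm v1 v2 χ w).2 ≤ (Lbl.eval Rp Rm v1 v2 φ w).2 then 0
       else (Lbl.eval Rp Rm v1 v2 χ w).2)
  | .sAnd φ χ, w =>
      (min (Lbl.eval Rp Rm v1 v2 φ w).1 (Lbl.eval Rp Rm v1 v2 χ w).1,
       min (Lbl.eval Rp Rm v1 v2 φ w).2 (Lbl.eval Rp Rm v1 v2 χ w).2)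
  | .sImp φ χ, w =>
      (Gimp (Lbl.eval Rp Rm v1 v2 φ w).1 (Lbl.eval Rp Rm v1 v2 χ w).1,
       Gimp (Lbl.eval Rp Rm v1 v2 φ w).2 (Lbl.eval Rp Rm v1 v2 χ w).2)
  | .box φ, w =>
      (sInf (Set.range fun w' => Gimp (Rp w w') (Lbl.eval Rp Rm v1 v2 φ w').1),
       sSup (Set.range fun w' => min (Rm w w') (Lbl.eval Rp Rm v1 v2 φ w').2))
  | .dia φ, w =>
      (sSup (Set.range fun w' => min (Rp w w') (Lbl.eval Rp Rm v1 v2 φ w').1),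
       sInf (Set.range fun w' => Gimp (Rm w w') (Lbl.eval Rp Rm v1 v2 φ w').2))
  | .bbox φ, w =>
      (sInf (Set.range fun w' => Gimp (Rp w w') (Lbl.eval Rp Rm v1 v2 φ w').1),
       sInf (Set.range fun w' => Gimp (Rm w w') (Lbl.eval Rp Rm v1 v2 φ w').2))
  | .bdia φ, w =>
      (sSup (Set.range fun w' => min (Rp w w') (Lbl.eval Rp Rm v1 v2 φ w').1),
       sSup (Set.range fun w' => min (Rm w w') (Lbl.eval Rp Rm v1 v2 φ w').2))

/-- KGinv(2)-validity on a pointed frame. -/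
def Valid2 {W : Type} (Rp Rm : W → W → ℝ) (φ : Fml2) (w : W) : Prop :=
  ∀ v : ℕ → W → ℝ, (∀ p u, v p u ∈ Set.Icc (0:ℝ) 1) → Fml2.eval Rp Rm v φ w = 1

/-- v₁-validity on a pointed frame. -/
def V1Valid {W : Type} (Rp Rm : W → W → ℝ) (φ : Lbl) (w : W) : Prop :=
  ∀ v1 v2 : ℕ → W → ℝ, (∀ p u, v1 p u ∈ Set.Icc (0:ℝ) 1) →
    (∀ p u, v2 p u ∈ Set.Icc (0:ℝ) 1) → (Lbl.eval Rp Rm v1 v2 φ w).1 = 1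

/-- v₂-validity on a pointed frame. -/
def V2Valid {W : Type} (Rp Rm : W → W → ℝ) (φ : Lbl) (w : W) : Prop :=
  ∀ v1 v2 : ℕ → W → ℝ, (∀ p u, v1 p u ∈ Set.Icc (0:ℝ) 1) →
    (∀ p u, v2 p u ∈ Set.Icc (0:ℝ) 1) → (Lbl.eval Rp Rm v1 v2 φ w).2 = 0

/-- Strong validity on a pointed frame. -/
def StrongValid {W : Type} (Rp Rm : W → W → ℝ) (φ : Lbl) (w : W) : Prop :=
  V1Valid Rp Rm φ w ∧ V2Valid Rp Rm φ w

/-- The ⋈ translation from L_inv(2) to Lbl: □₁ ↦ □, ◇₁ ↦ ◇, □₂ ↦ ¬◇¬, ◇₂ ↦ ¬□¬,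
¬ᵢ ↦ ¬− . -/
def Fml2.toBl : Fml2 → Lbl
  | .var p => .var p
  | .inv φ => .neg (.conf φ.toBl)
  | .and φ χ => .and φ.toBl χ.toBl
  | .imp φ χ => .imp φ.toBl χ.toBl
  | .box1 φ => .box φ.toBl
  | .dia1 φ => .dia φ.toBl
  | .box2 φ => .neg (.dia (.neg φ.toBl))
  | .dia2 φ => .neg (.box (.neg φ.toBl))

/-- Since `¬` swaps the two coordinates, the first coordinate of `¬◇¬φ` (resp. `¬□¬φ`) is the
`R⁻`-infimum (resp. `R⁻`-supremum) of the first coordinate of `φ`, i.e. `□₂` (resp. `◇₂`); likewise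
`¬−` acts on the first coordinate as `1 - ·`. -/
theorem Lbl.eval_toBl_fst {W : Type} (Rp Rm : W → W → ℝ) (v1 v2 : ℕ → W → ℝ) (φ : Fml2) (w : W) :
    (Lbl.eval Rp Rm v1 v2 φ.toBl w).1 = Fml2.eval Rp Rm v1 φ w := by
  induction φ generalizing w <;> simp [Fml2.toBl, Lbl.eval, Fml2.eval, *]

theorem statement11_general {W : Type} (Rp Rm : W → W → ℝ)
    (w : W) (φ : Fml2) :
    Valid2 Rp Rm φ w ↔ V1Valid Rp Rm φ.toBl w := by
  refine ⟨fun h v1 v2 h1 _ => ?_, fun h v hv => ?_⟩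
  · rw [Lbl.eval_toBl_fst]
    exact h v1 h1
  · rw [← Lbl.eval_toBl_fst Rp Rm v v]
    exact h v v hv hv

/-- φ is KGinv(2)-valid on ⟨F,w⟩ iff φ^⋈ is v₁-valid on ⟨F,w⟩. -/
theorem statement11 {W : Type} [Nonempty W] (Rp Rm : W → W → ℝ)
    (hRp : ∀ w w', Rp w w' ∈ Set.Icc (0:ℝ) 1)
    (hRm : ∀ w w', Rm w w' ∈ Set.Icc (0:ℝ) 1)
    (w : W) (φ : Fml2) :
    Valid2 Rp Rm φ w ↔ V1Valid Rp Rm φ.toBl w :=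
  statement11_general Rp Rm w φ
end

section
/- Let F = ⟨W,R⁺,R⁻⟩ be a bi-relational fuzzy frame, let v be a KGinv(2)-valuation on F, and define a KGbl-model on F by v₁(p,u) = v(p,u) and v₂(p,u) = v(p*,u) for all p ∈ Prop and u ∈ W. Then for every χ ∈ Lbl and every u ∈ W: v(χ⊕,u) = v₁(χ,u) and v(χ⊖,u) = v₂(χ,u). Conversely, given any KGbl-model ⟨v₁,v₂⟩ on F, defining the KGinv(2)-valuation v by v(p,u) = v₁(p,u) and v(p*,u) = v₂(p,u) yields the same equalities for every χ ∈ Lbl and u ∈ W. -/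
def Fml2.or (φ χ : Fml2) : Fml2 := .inv (.and (.inv φ) (.inv χ))
def Fml2.coimp (φ χ : Fml2) : Fml2 := .inv (.imp (.inv χ) (.inv φ))
def Fml2.One : Fml2 := .imp (.var 0) (.var 0)
def Fml2.Zero : Fml2 := .inv Fml2.One
def Fml2.snot (φ : Fml2) : Fml2 := .imp φ Fml2.Zero

/-- The pair of translations (⊕, ⊖) : Lbl → L_inv(2); a variable p is encoded as
`var (2*p)` and its fresh copy p* as `var (2*p+1)`. -/
def Lbl.tr : Lbl → Fml2 × Fml2
  | .var p => (.var (2*p), .var (2*p+1))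
  | .neg φ => (φ.tr.2, φ.tr.1)
  | .conf φ => (.inv φ.tr.2, .inv φ.tr.1)
  | .and φ χ => (.and φ.tr.1 χ.tr.1, Fml2.or φ.tr.2 χ.tr.2)
  | .sAnd φ χ => (.and φ.tr.1 χ.tr.1, .and φ.tr.2 χ.tr.2)
  | .imp φ χ => (.imp φ.tr.1 χ.tr.1, Fml2.coimp χ.tr.2 φ.tr.2)
  | .sImp φ χ => (.imp φ.tr.1 χ.tr.1, .imp φ.tr.2 χ.tr.2)
  | .box φ => (.box1 φ.tr.1, .dia2 φ.tr.2)
  | .dia φ => (.dia1 φ.tr.1, .box2 φ.tr.2)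
  | .bbox φ => (.box1 φ.tr.1, .box2 φ.tr.2)
  | .bdia φ => (.dia1 φ.tr.1, .dia2 φ.tr.2)

/-- The ⊕ translation. -/
def Lbl.pos (φ : Lbl) : Fml2 := φ.tr.1
/-- The ⊖ translation. -/
def Lbl.negt (φ : Lbl) : Fml2 := φ.tr.2

/-! Both directions are a single structural induction. The only cases that are not literal
copies of each other are the ⊖-translations of `∧` and `→`: the involution `x ↦ 1 - x` turns
`min` into `max` and Gödel implication into its dual, which is exactly the v₂-clause of KGbl. -/

namespace Fml2

variable {W : Type} (Rp Rm : W → W → ℝ) (v : ℕ → W → ℝ)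

@[simp]
theorem eval_or (φ χ : Fml2) (w : W) :
    (φ.or χ).eval Rp Rm v w = max (φ.eval Rp Rm v w) (χ.eval Rp Rm v w) := by
  simp only [Fml2.or, eval, min_sub_sub_left, sub_sub_cancel]

@[simp]
theorem eval_coimp (φ χ : Fml2) (w : W) :
    (φ.coimp χ).eval Rp Rm v w =
      if φ.eval Rp Rm v w ≤ χ.eval Rp Rm v w then 0 else φ.eval Rp Rm v w := by
  simp only [Fml2.coimp, eval, Gimp, sub_le_sub_iff_left]
  split_ifs <;> ring

end Fml2

theorem Lbl.eval_eq_eval_pos_negt {W : Type} (Rp Rm : W → W → ℝ) (v : ℕ → W → ℝ) (χ : Lbl)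
    (u : W) :
    Lbl.eval Rp Rm (fun p => v (2*p)) (fun p => v (2*p+1)) χ u =
      (Fml2.eval Rp Rm v χ.pos u, Fml2.eval Rp Rm v χ.negt u) := by
  unfold Lbl.pos Lbl.negt
  induction χ generalizing u <;> simp [Lbl.tr, Lbl.eval, Fml2.eval, *]

theorem statement12_general {W : Type} (Rp Rm : W → W → ℝ) :
    (∀ v : ℕ → W → ℝ, (∀ p u, v p u ∈ Set.Icc (0:ℝ) 1) →
       ∀ (χ : Lbl) (u : W),
         Fml2.eval Rp Rm v χ.pos u =
           (Lbl.eval Rp Rm (fun p u => v (2*p) u) (fun p u => v (2*p+1) u) χ u).1 ∧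
         Fml2.eval Rp Rm v χ.negt u =
           (Lbl.eval Rp Rm (fun p u => v (2*p) u) (fun p u => v (2*p+1) u) χ u).2) ∧
    (∀ v1 v2 : ℕ → W → ℝ, (∀ p u, v1 p u ∈ Set.Icc (0:ℝ) 1) →
       (∀ p u, v2 p u ∈ Set.Icc (0:ℝ) 1) →
       ∀ (χ : Lbl) (u : W),
         Fml2.eval Rp Rm (fun n u => if n % 2 = 0 then v1 (n/2) u else v2 (n/2) u)
             χ.pos u = (Lbl.eval Rp Rm v1 v2 χ u).1 ∧
         Fml2.eval Rp Rm (fun n u => if n % 2 = 0 then v1 (n/2) u else v2 (n/2) u)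
             χ.negt u = (Lbl.eval Rp Rm v1 v2 χ u).2) := by
  refine ⟨fun v _ χ u => Prod.ext_iff.mp (Lbl.eval_eq_eval_pos_negt Rp Rm v χ u).symm,
    fun v1 v2 _ _ χ u => ?_⟩
  set v : ℕ → W → ℝ := fun n u => if n % 2 = 0 then v1 (n/2) u else v2 (n/2) u
  have hv1 : (fun p => v (2*p)) = v1 := by
    funext p u
    simp [v]
  have hv2 : (fun p => v (2*p+1)) = v2 := by
    funext p u
    simp [v, Nat.add_mod, Nat.add_div]
  have h := Lbl.eval_eq_eval_pos_negt Rp Rm v χ u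
  rw [hv1, hv2] at h
  exact Prod.ext_iff.mp h.symm

/-- The translations ⊕ and ⊖ are semantically faithful, in both directions. -/
theorem statement12 {W : Type} [Nonempty W] (Rp Rm : W → W → ℝ)
    (hRp : ∀ w w', Rp w w' ∈ Set.Icc (0:ℝ) 1)
    (hRm : ∀ w w', Rm w w' ∈ Set.Icc (0:ℝ) 1) :
    (∀ v : ℕ → W → ℝ, (∀ p u, v p u ∈ Set.Icc (0:ℝ) 1) →
       ∀ (χ : Lbl) (u : W),
         Fml2.eval Rp Rm v χ.pos u =
           (Lbl.eval Rp Rm (fun p u => v (2*p) u) (fun p u => v (2*p+1) u) χ u).1 ∧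
         Fml2.eval Rp Rm v χ.negt u =
           (Lbl.eval Rp Rm (fun p u => v (2*p) u) (fun p u => v (2*p+1) u) χ u).2) ∧
    (∀ v1 v2 : ℕ → W → ℝ, (∀ p u, v1 p u ∈ Set.Icc (0:ℝ) 1) →
       (∀ p u, v2 p u ∈ Set.Icc (0:ℝ) 1) →
       ∀ (χ : Lbl) (u : W),
         Fml2.eval Rp Rm (fun n u => if n % 2 = 0 then v1 (n/2) u else v2 (n/2) u)
             χ.pos u = (Lbl.eval Rp Rm v1 v2 χ u).1 ∧
         Fml2.eval Rp Rm (fun n u => if n % 2 = 0 then v1 (n/2) u else v2 (n/2) u)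
             χ.negt u = (Lbl.eval Rp Rm v1 v2 χ u).2) :=
  statement12_general Rp Rm
end

section
/- The formula □𝟎 ∨ ∼□𝟎 is KGinv-valid on every fuzzy frame. However, in every KGbl-model on the single-point bi-relational frame ⟨{w},R⁺,R⁻⟩ with R⁺(w,w) = R⁻(w,w) = 1/2, one has v₁(□𝟎 ∨ ∼□𝟎, w) = 1 and v₂(□𝟎 ∨ ∼□𝟎, w) = 1/2; hence □𝟎 ∨ ∼□𝟎 is not strongly valid in KGbl. -/
def Fml.or (φ χ : Fml) : Fml := .inv (.and (.inv φ) (.inv χ))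
def Fml.snot (φ : Fml) : Fml := .imp φ (.inv (.imp (.var 0) (.var 0)))

/-- □𝟎 ∨ ∼□𝟎 in L_inv. -/
def FormInv : Fml := Fml.or (.box (.inv (.imp (.var 0) (.var 0))))
  (Fml.snot (.box (.inv (.imp (.var 0) (.var 0)))))

def Lbl.One : Lbl := .imp (.var 0) (.var 0)
def Lbl.Zero : Lbl := .neg Lbl.One
def Lbl.or (φ χ : Lbl) : Lbl := .neg (.and (.neg φ) (.neg χ))
def Lbl.snot (φ : Lbl) : Lbl := .imp φ Lbl.Zero

/-- □𝟎 ∨ ∼□𝟎 in Lbl. -/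
def FormBl : Lbl := Lbl.or (.box Lbl.Zero) (Lbl.snot (.box Lbl.Zero))

lemma rangePUnit (f : PUnit → ℝ) : Set.range f = {f PUnit.unit} := by
  ext x
  constructor
  · rintro ⟨y, rfl⟩; rfl
  · rintro rfl; exact ⟨PUnit.unit, rfl⟩

theorem statement13 :
    (∀ (W : Type) (_ : Nonempty W) (R : W → W → ℝ),
        (∀ w w', R w w' ∈ Set.Icc (0:ℝ) 1) → KGinvValid R FormInv) ∧
    (∀ v1 v2 : ℕ → PUnit → ℝ, (∀ p u, v1 p u ∈ Set.Icc (0:ℝ) 1) →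
        (∀ p u, v2 p u ∈ Set.Icc (0:ℝ) 1) →
        (Lbl.eval (fun _ _ : PUnit => (1:ℝ)/2) (fun _ _ : PUnit => (1:ℝ)/2) v1 v2
            FormBl PUnit.unit).1 = 1 ∧
        (Lbl.eval (fun _ _ : PUnit => (1:ℝ)/2) (fun _ _ : PUnit => (1:ℝ)/2) v1 v2
            FormBl PUnit.unit).2 = 1/2) ∧
    ¬ StrongValid (fun _ _ : PUnit => (1:ℝ)/2) (fun _ _ : PUnit => (1:ℝ)/2)
        FormBl PUnit.unit := by
  have hbl : ∀ v1 v2 : ℕ → PUnit → ℝ,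
      (Lbl.eval (fun _ _ : PUnit => (1:ℝ)/2) (fun _ _ : PUnit => (1:ℝ)/2) v1 v2
          FormBl PUnit.unit) = (1, 1/2) := by
    intro v1 v2
    have hzero : ∀ u, Lbl.eval (fun _ _ : PUnit => (1:ℝ)/2) (fun _ _ : PUnit => (1:ℝ)/2)
        v1 v2 Lbl.Zero u = (0, 1) := by
      intro u
      simp [Lbl.Zero, Lbl.One, Lbl.eval, Gimp]
    have hbox : Lbl.eval (fun _ _ : PUnit => (1:ℝ)/2) (fun _ _ : PUnit => (1:ℝ)/2)
        v1 v2 (.box Lbl.Zero) PUnit.unit = (0, 1/2) := by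
      show (sInf _, sSup _) = _
      rw [rangePUnit, rangePUnit, hzero]
      norm_num [Gimp]
    simp only [FormBl, Lbl.or, Lbl.snot, Lbl.eval, hbox, hzero]
    norm_num [Gimp]
  refine ⟨?_, fun v1 v2 _ _ => by rw [hbl]; exact ⟨rfl, rfl⟩, ?_⟩
  · intro W hW R hR v hv w
    have hzero : ∀ w', Fml.eval R v (.inv (.imp (.var 0) (.var 0))) w' = 0 := by
      intro w'; simp [Fml.eval, Gimp]
    set f : W → ℝ := fun w' => Gimp (R w w')
        (Fml.eval R v (.inv (.imp (.var 0) (.var 0))) w') with hf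
    have hfval : ∀ w', f w' = if R w w' ≤ 0 then 1 else 0 := by
      intro w'; rw [hf]; simp only [hzero]; unfold Gimp; rfl
    set a := sInf (Set.range f) with ha
    have key : a = 0 ∨ a = 1 := by
      by_cases h : ∃ w', 0 < R w w'
      · left
        obtain ⟨w', hw'⟩ := h
        have hbdd : BddBelow (Set.range f) := by
          refine ⟨0, ?_⟩
          rintro x ⟨u, rfl⟩
          rw [hfval]; split <;> norm_num
        have h0 : f w' = 0 := by rw [hfval]; simp [not_le.2 hw']
        have hle : a ≤ 0 := h0 ▸ csInf_le hbdd ⟨w', rfl⟩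
        have hge : 0 ≤ a := by
          refine le_csInf ⟨f w, ⟨w, rfl⟩⟩ ?_
          rintro x ⟨u, rfl⟩
          rw [hfval]; split <;> norm_num
        linarith
      · right
        push_neg at h
        have hrange : Set.range f = {1} := by
          ext x
          constructor
          · rintro ⟨u, rfl⟩
            rw [hfval]
            simp [h u]
          · rintro rfl
            refine ⟨w, ?_⟩
            rw [hfval]; simp [h w]
        rw [ha, hrange, csInf_singleton]
    have hform : Fml.eval R v FormInv w
        = 1 - min (1 - a) (1 - Gimp a (1 - Gimp (v 0 w) (v 0 w))) := rfl
    rw [hform]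
    rcases key with h | h <;> rw [h] <;> norm_num [Gimp]
  · rintro ⟨-, h2⟩
    have := h2 (fun _ _ => 0) (fun _ _ => 0) (fun p u => by norm_num) (fun p u => by norm_num)
    rw [hbl] at this
    norm_num at this
end

section
/- Let g : [0,1] → [0,1] satisfy g(0) = 0, g(1) = 1, g(1−x) = 1−g(x) for all x, and x ≤ x' iff g(x) ≤ g(x'). Let M = ⟨W,R_M,T_M,v_M⟩ be a KGinvF-model and let N = ⟨W,R_N,T_N,v_N⟩ be the KGinvF-model with the same worlds, R_N(w,w') = g(R_M(w,w')), T_N(w) = g[T_M(w)], and v_N(p,w) = g(v_M(p,w)) for all p ∈ Prop and w,w' ∈ W. Then v_N(φ,w) = g(v_M(φ,w)) for every φ ∈ L_inv and every w ∈ W. -/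
/-- An F-model: the data of a fuzzy frame with finitely many admissible modal values
at each state, together with a valuation. -/
structure FModel (W : Type) where
  R : W → W → ℝ
  T : W → Set ℝ
  v : ℕ → W → ℝ

/-- The conditions on the data of an F-model. -/
def FModel.Good {W : Type} (M : FModel W) : Prop :=
  (∀ w w', M.R w w' ∈ Set.Icc (0:ℝ) 1) ∧
  (∀ w, (M.T w).Finite) ∧
  (∀ w, M.T w ⊆ Set.Icc (0:ℝ) 1) ∧
  (∀ w, (0:ℝ) ∈ M.T w ∧ (1:ℝ) ∈ M.T w) ∧
  (∀ p w, M.v p w ∈ Set.Icc (0:ℝ) 1)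

noncomputable def FModel.eval {W : Type} (M : FModel W) : Fml → W → ℝ
  | .var p, w => M.v p w
  | .inv φ, w => 1 - FModel.eval M φ w
  | .and φ χ, w => min (FModel.eval M φ w) (FModel.eval M χ w)
  | .imp φ χ, w => Gimp (FModel.eval M φ w) (FModel.eval M χ w)
  | .box φ, w =>
      sSup {x | x ∈ M.T w ∧
        x ≤ sInf (Set.range fun w' => Gimp (M.R w w') (FModel.eval M φ w'))}
  | .dia φ, w =>
      sInf {x | x ∈ M.T w ∧
        sSup (Set.range fun w' => min (M.R w w') (FModel.eval M φ w')) ≤ x}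

lemma Gimp_mem {x y : ℝ} (hy : y ∈ Set.Icc (0:ℝ) 1) : Gimp x y ∈ Set.Icc (0:ℝ) 1 := by
  unfold Gimp; split
  · exact ⟨zero_le_one, le_rfl⟩
  · exact hy


lemma eval_mem {W : Type} [Nonempty W] (M : FModel W) (hM : M.Good) :
    ∀ (φ : Fml) (w : W), M.eval φ w ∈ Set.Icc (0:ℝ) 1 := by
  obtain ⟨hR, hT, hTsub, hT01, hv⟩ := hM
  intro φ
  induction φ with
  | var p => exact fun w => hv p w
  | inv φ ih =>
      intro w
      have := ih w
      simp only [FModel.eval, Set.mem_Icc] at *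
      constructor <;> linarith [this.1, this.2]
  | and φ χ ihφ ihχ =>
      intro w
      simp only [FModel.eval, Set.mem_Icc] at *
      exact ⟨le_min (ihφ w).1 (ihχ w).1, min_le_of_left_le (ihφ w).2⟩
  | imp φ χ ihφ ihχ =>
      intro w
      exact Gimp_mem (ihχ w)
  | box φ ih =>
      intro w
      set S := {x | x ∈ M.T w ∧
        x ≤ sInf (Set.range fun w' => Gimp (M.R w w') (FModel.eval M φ w'))} with hS
      have hSsub : S ⊆ M.T w := fun x hx => hx.1
      have hSfin : S.Finite := (hT w).subset hSsub
      have h0S : (0:ℝ) ∈ S := by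
        refine ⟨(hT01 w).1, le_csInf (Set.range_nonempty _) ?_⟩
        rintro b ⟨w', rfl⟩
        exact (Gimp_mem (ih w')).1
      show sSup S ∈ Set.Icc (0:ℝ) 1
      constructor
      · exact le_csSup hSfin.bddAbove h0S
      · exact csSup_le ⟨0, h0S⟩ (fun x hx => (hTsub w (hSsub hx)).2)
  | dia φ ih =>
      intro w
      set S := {x | x ∈ M.T w ∧
        sSup (Set.range fun w' => min (M.R w w') (FModel.eval M φ w')) ≤ x} with hS
      have hSsub : S ⊆ M.T w := fun x hx => hx.1
      have hSfin : S.Finite := (hT w).subset hSsub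
      have h1S : (1:ℝ) ∈ S := by
        refine ⟨(hT01 w).2, csSup_le (Set.range_nonempty _) ?_⟩
        rintro b ⟨w', rfl⟩
        exact min_le_of_left_le (hR w w').2
      show sInf S ∈ Set.Icc (0:ℝ) 1
      constructor
      · exact le_csInf ⟨1, h1S⟩ (fun x hx => (hTsub w (hSsub hx)).1)
      · exact csInf_le hSfin.bddBelow h1S

section Main

variable (g : ℝ → ℝ)
    (hg01 : ∀ x ∈ Set.Icc (0:ℝ) 1, g x ∈ Set.Icc (0:ℝ) 1)
    (hg0 : g 0 = 0) (hg1 : g 1 = 1)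
    (hginv : ∀ x ∈ Set.Icc (0:ℝ) 1, g (1 - x) = 1 - g x)
    (hgmono : ∀ x ∈ Set.Icc (0:ℝ) 1, ∀ x' ∈ Set.Icc (0:ℝ) 1, (x ≤ x' ↔ g x ≤ g x'))

include hg1 hgmono in
lemma gGimp {x y : ℝ} (hx : x ∈ Set.Icc (0:ℝ) 1) (hy : y ∈ Set.Icc (0:ℝ) 1) :
    Gimp (g x) (g y) = g (Gimp x y) := by
  unfold Gimp
  by_cases h : x ≤ y
  · rw [if_pos ((hgmono x hx y hy).mp h), if_pos h, hg1]
  · rw [if_neg (fun hg => h ((hgmono x hx y hy).mpr hg)), if_neg h]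

include hgmono in
lemma gmin {x y : ℝ} (hx : x ∈ Set.Icc (0:ℝ) 1) (hy : y ∈ Set.Icc (0:ℝ) 1) :
    min (g x) (g y) = g (min x y) := by
  rcases le_total x y with h | h
  · rw [min_eq_left ((hgmono x hx y hy).mp h), min_eq_left h]
  · rw [min_eq_right ((hgmono y hy x hx).mp h), min_eq_right h]

include hgmono in
lemma gsSup {S : Set ℝ} (hfin : S.Finite) (hne : S.Nonempty)
    (hsub : S ⊆ Set.Icc (0:ℝ) 1) : sSup (g '' S) = g (sSup S) := by
  have hmem : sSup S ∈ S := hne.csSup_mem hfin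
  apply le_antisymm
  · refine csSup_le (hne.image g) ?_
    rintro _ ⟨x, hx, rfl⟩
    exact (hgmono x (hsub hx) _ (hsub hmem)).mp (le_csSup hfin.bddAbove hx)
  · exact le_csSup (hfin.image g).bddAbove ⟨sSup S, hmem, rfl⟩

include hgmono in
lemma gsInf {S : Set ℝ} (hfin : S.Finite) (hne : S.Nonempty)
    (hsub : S ⊆ Set.Icc (0:ℝ) 1) : sInf (g '' S) = g (sInf S) := by
  have hmem : sInf S ∈ S := hne.csInf_mem hfin
  apply le_antisymm
  · exact csInf_le (hfin.image g).bddBelow ⟨sInf S, hmem, rfl⟩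
  · refine le_csInf (hne.image g) ?_
    rintro _ ⟨x, hx, rfl⟩
    exact (hgmono _ (hsub hmem) x (hsub hx)).mp (csInf_le hfin.bddBelow hx)

end Main

/-- Transforming an F-model along an involutive order-automorphism g of [0,1]
transforms the values of all formulas by g. -/
theorem statement16 {W : Type} [Nonempty W] (g : ℝ → ℝ)
    (hg01 : ∀ x ∈ Set.Icc (0:ℝ) 1, g x ∈ Set.Icc (0:ℝ) 1)
    (hg0 : g 0 = 0) (hg1 : g 1 = 1)
    (hginv : ∀ x ∈ Set.Icc (0:ℝ) 1, g (1 - x) = 1 - g x)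
    (hgmono : ∀ x ∈ Set.Icc (0:ℝ) 1, ∀ x' ∈ Set.Icc (0:ℝ) 1, (x ≤ x' ↔ g x ≤ g x'))
    (M : FModel W) (hM : M.Good) :
    ∀ (φ : Fml) (w : W),
      FModel.eval ⟨fun w w' => g (M.R w w'), fun w => g '' M.T w,
          fun p w => g (M.v p w)⟩ φ w = g (M.eval φ w) := by
  obtain ⟨hR, hT, hTsub, hT01, hv⟩ := hM
  have hmem := eval_mem M ⟨hR, hT, hTsub, hT01, hv⟩
  intro φ
  induction φ with
  | var p => intro w; rfl
  | inv φ ih =>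
      intro w
      simp only [FModel.eval, ih w]
      exact (hginv _ (hmem φ w)).symm
  | and φ χ ihφ ihχ =>
      intro w
      simp only [FModel.eval, ihφ w, ihχ w]
      exact gmin g hgmono (hmem φ w) (hmem χ w)
  | imp φ χ ihφ ihχ =>
      intro w
      simp only [FModel.eval, ihφ w, ihχ w]
      exact gGimp g hg1 hgmono (hmem φ w) (hmem χ w)
  | box φ ih =>
      intro w
      simp only [FModel.eval, ih]
      have hfmem : ∀ w', Gimp (M.R w w') (M.eval φ w') ∈ Set.Icc (0:ℝ) 1 :=
        fun w' => Gimp_mem (hmem φ w')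
      have hfun : (fun w' => Gimp (g (M.R w w')) (g (M.eval φ w'))) =
          fun w' => g (Gimp (M.R w w') (M.eval φ w')) :=
        funext fun w' => gGimp g hg1 hgmono (hR w w') (hmem φ w')
      rw [hfun]
      set f := fun w' => Gimp (M.R w w') (M.eval φ w') with hf
      have hbdd : BddBelow (Set.range f) := ⟨0, by rintro _ ⟨w', rfl⟩; exact (hfmem w').1⟩
      have hbdd' : BddBelow (Set.range fun w' => g (f w')) :=
        ⟨0, by rintro _ ⟨w', rfl⟩; exact (hg01 _ (hfmem w')).1⟩
      have hiff : ∀ x ∈ Set.Icc (0:ℝ) 1,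
          (g x ≤ sInf (Set.range fun w' => g (f w')) ↔ x ≤ sInf (Set.range f)) := by
        intro x hx
        rw [le_csInf_iff hbdd (Set.range_nonempty _),
            le_csInf_iff hbdd' (Set.range_nonempty _)]
        constructor
        · rintro h b ⟨w', rfl⟩
          exact (hgmono x hx _ (hfmem w')).mpr (h _ ⟨w', rfl⟩)
        · rintro h b ⟨w', rfl⟩
          exact (hgmono x hx _ (hfmem w')).mp (h _ ⟨w', rfl⟩)
      have hset : {x | x ∈ g '' M.T w ∧ x ≤ sInf (Set.range fun w' => g (f w'))} =
          g '' {x | x ∈ M.T w ∧ x ≤ sInf (Set.range f)} := by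
        ext y
        constructor
        · rintro ⟨⟨x, hxT, rfl⟩, hle⟩
          exact ⟨x, ⟨hxT, (hiff x (hTsub w hxT)).mp hle⟩, rfl⟩
        · rintro ⟨x, ⟨hxT, hle⟩, rfl⟩
          exact ⟨⟨x, hxT, rfl⟩, (hiff x (hTsub w hxT)).mpr hle⟩
      rw [hset]
      refine gsSup g hgmono ((hT w).subset fun x hx => hx.1) ?_ (fun x hx => hTsub w hx.1)
      exact ⟨0, (hT01 w).1, le_csInf (Set.range_nonempty _) (by rintro _ ⟨w', rfl⟩; exact (hfmem w').1)⟩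
  | dia φ ih =>
      intro w
      simp only [FModel.eval, ih]
      have hfmem : ∀ w', min (M.R w w') (M.eval φ w') ∈ Set.Icc (0:ℝ) 1 := by
        intro w'
        exact ⟨le_min (hR w w').1 (hmem φ w').1, min_le_of_left_le (hR w w').2⟩
      have hfun : (fun w' => min (g (M.R w w')) (g (M.eval φ w'))) =
          fun w' => g (min (M.R w w') (M.eval φ w')) :=
        funext fun w' => gmin g hgmono (hR w w') (hmem φ w')
      rw [hfun]
      set f := fun w' => min (M.R w w') (M.eval φ w') with hf
      have hiff : ∀ x ∈ Set.Icc (0:ℝ) 1,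
          (sSup (Set.range fun w' => g (f w')) ≤ g x ↔ sSup (Set.range f) ≤ x) := by
        intro x hx
        rw [csSup_le_iff ⟨1, by rintro _ ⟨w', rfl⟩; exact (hg01 _ (hfmem w')).2⟩ (Set.range_nonempty _),
            csSup_le_iff ⟨1, by rintro _ ⟨w', rfl⟩; exact (hfmem w').2⟩ (Set.range_nonempty _)]
        constructor
        · rintro h b ⟨w', rfl⟩
          exact (hgmono _ (hfmem w') x hx).mpr (h _ ⟨w', rfl⟩)
        · rintro h b ⟨w', rfl⟩
          exact (hgmono _ (hfmem w') x hx).mp (h _ ⟨w', rfl⟩)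
      have hset : {x | x ∈ g '' M.T w ∧ sSup (Set.range fun w' => g (f w')) ≤ x} =
          g '' {x | x ∈ M.T w ∧ sSup (Set.range f) ≤ x} := by
        ext y
        constructor
        · rintro ⟨⟨x, hxT, rfl⟩, hle⟩
          exact ⟨x, ⟨hxT, (hiff x (hTsub w hxT)).mp hle⟩, rfl⟩
        · rintro ⟨x, ⟨hxT, hle⟩, rfl⟩
          exact ⟨⟨x, hxT, rfl⟩, (hiff x (hTsub w hxT)).mpr hle⟩
      rw [hset]
      refine gsInf g hgmono ((hT w).subset fun x hx => hx.1) ?_ (fun x hx => hTsub w hx.1)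
      exact ⟨1, (hT01 w).2, csSup_le (Set.range_nonempty _) (by rintro _ ⟨w', rfl⟩; exact (hfmem w').2)⟩
end
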